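/- Let K_B > 0, m_s, m_k > 0, n_s, n_k > 0, λ_{sk} > 0, u_s, u_k ∈ ℝ³, T_s, T_k > 0, and let f_s : ℝ³ → ℝ be integrable with ∫ f_s(v) dv = n_s, ∫ v f_s(v) dv = n_s u_s, and ∫ |v|² f_s(v) dv = n_s |u_s|² + 3 n_s K_B T_s/m_s, with |v|² f_s integrable. Set ν_{sk} = λ_{sk} n_k, a_{sk} = m_k/(m_s+m_k), u_{sk} = (1−a_{sk}) u_s + a_{sk} u_k, b_{sk} = 2a_{sk}m_s/(m_s+m_k), γ_{sk} = (m_s a_{sk}/3)(2m_k/(m_s+m_k)−a_{sk}), T_{sk} = (1−b_{sk})T_s + b_{sk}T_k + (γ_{sk}/K_B)|u_s−u_k|², and M(v;a,b) = (2πb)^{−3/2} exp(−|v−a|²/(2b)). Then the energy exchange rate of the BBGSP bi-species operator equals ∫ (m_s|v|²/2) ν_{sk} ( n_s M(v; u_{sk}, K_B T_{sk}/m_s) − f_s(v) ) dv = λ_{sk} (m_s m_k/(m_s+m_k)²) n_s n_k [ (m_s u_s + m_k u_k)·(u_k − u_s) + 3K_B (T_k − T_s) ] =: 𝓢_{sk};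 in particular, if λ_{sk} = λ_{ks} then 𝓢_{sk} + 𝓢_{ks} = 0, so the BBGSP model conserves total kinetic energy. -/

import Mathlib

/-!
The Maxwellian `M(·; c, d)` is the product of the one-dimensional Gaussian densities with
means `c i` and variance `d`, so its second moment is `‖c‖² + 3 d`: in each coordinate,
squared mean plus variance. The energy exchange rate is therefore
`ν_{sk} n_s` times the gap `m_s/2 (‖u_{sk}‖² + 3 K_B T_{sk}/m_s) - m_s/2 (‖u_s‖² + 3 K_B T_s/m_s)`
between the kinetic energies per particle of the target Maxwellian and of `f_s`, and the BBGSP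
choice of `u_{sk}`, `T_{sk}` makes this gap exactly `𝓢_{sk} / (ν_{sk} n_s)`. The bracket in
`𝓢_{sk}` is antisymmetric under `s ↔ k`, which gives `𝓢_{sk} + 𝓢_{ks} = 0`.
-/

open MeasureTheory RealInnerProductSpace

namespace ProbabilityTheory

open NNReal

lemma integral_sq_mul_gaussianPDFReal (μ : ℝ) {v : ℝ≥0} (hv : v ≠ 0) :
    ∫ x, x ^ 2 * gaussianPDFReal μ v x = μ ^ 2 + v := by
  have h := variance_eq_sub (memLp_id_gaussianReal (μ := μ) (v := v) 2)
  simp only [Pi.pow_apply, id_eq] at h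
  rw [variance_id_gaussianReal, integral_id_gaussianReal,
    integral_gaussianReal_eq_integral_smul hv] at h
  simp only [smul_eq_mul] at h
  simp_rw [mul_comm _ (gaussianPDFReal μ v _)]
  linarith

variable {ι : Type*} [Fintype ι]

lemma integral_sq_eval_mul_prod_gaussianPDFReal (μ : ι → ℝ) {v : ℝ≥0} (hv : v ≠ 0) (i : ι) :
    ∫ x : ι → ℝ, x i ^ 2 * ∏ j, gaussianPDFReal (μ j) v (x j) = μ i ^ 2 + v := by
  classical
  let g : ι → ℝ → ℝ := fun j t ↦ (if j = i then t ^ 2 else 1) * gaussianPDFReal (μ j) v t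
  have hprod (x : ι → ℝ) : x i ^ 2 * ∏ j, gaussianPDFReal (μ j) v (x j) = ∏ j, g j (x j) := by
    simp only [g, Finset.prod_mul_distrib, Finset.prod_ite_eq', Finset.mem_univ, if_true]
  have hfactor (j : ι) : ∫ t, g j t = if j = i then μ i ^ 2 + v else 1 := by
    by_cases hj : j = i
    · subst hj
      simp [g, integral_sq_mul_gaussianPDFReal _ hv]
    · simp [g, hj, integral_gaussianPDFReal_eq_one _ hv]
  simp_rw [hprod, integral_fintype_prod_volume_eq_prod, hfactor, Finset.prod_ite_eq']
  simp

/-- The Bochner integral of a non-integrable function is `0`, so a nonzero value forces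
integrability. -/
lemma integrable_sq_eval_mul_prod_gaussianPDFReal (μ : ι → ℝ) {v : ℝ≥0} (hv : v ≠ 0) (i : ι) :
    Integrable fun x : ι → ℝ ↦ x i ^ 2 * ∏ j, gaussianPDFReal (μ j) v (x j) :=
  .of_integral_ne_zero <| by
    rw [integral_sq_eval_mul_prod_gaussianPDFReal μ hv]
    have : (0 : ℝ) < v := by positivity
    positivity

lemma integrable_sum_sq_mul_prod_gaussianPDFReal (μ : ι → ℝ) {v : ℝ≥0} (hv : v ≠ 0) :
    Integrable fun x : ι → ℝ ↦ (∑ i, x i ^ 2) * ∏ j, gaussianPDFReal (μ j) v (x j) := by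
  simp_rw [Finset.sum_mul]
  exact integrable_finsetSum _ fun i _ ↦ integrable_sq_eval_mul_prod_gaussianPDFReal μ hv i

lemma integral_sum_sq_mul_prod_gaussianPDFReal (μ : ι → ℝ) {v : ℝ≥0} (hv : v ≠ 0) :
    ∫ x : ι → ℝ, (∑ i, x i ^ 2) * ∏ j, gaussianPDFReal (μ j) v (x j)
      = ∑ i, μ i ^ 2 + Fintype.card ι * v := by
  simp_rw [Finset.sum_mul]
  rw [integral_finsetSum _ fun i _ ↦ integrable_sq_eval_mul_prod_gaussianPDFReal μ hv i]
  simp [integral_sq_eval_mul_prod_gaussianPDFReal μ hv, Finset.sum_add_distrib]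

end ProbabilityTheory

open Real ProbabilityTheory

noncomputable def maxwellian {ι : Type*} [Fintype ι] (c : EuclideanSpace ℝ ι) (d : ℝ)
    (v : EuclideanSpace ℝ ι) : ℝ :=
  (2 * π * d) ^ (-(Fintype.card ι : ℝ) / 2) * exp (-‖v - c‖ ^ 2 / (2 * d))

section Maxwellian

variable {ι : Type*} [Fintype ι]

lemma maxwellian_toLp_eq_prod (c : EuclideanSpace ℝ ι) {d : ℝ} (hd : 0 < d) (x : ι → ℝ) :
    maxwellian c d (WithLp.toLp 2 x) = ∏ i, gaussianPDFReal (c i) d.toNNReal (x i) := by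
  simp only [maxwellian, gaussianPDFReal, Finset.prod_mul_distrib, Finset.prod_const,
    ← Real.exp_sum, Real.coe_toNNReal _ hd.le, EuclideanSpace.real_norm_sq_eq]
  congr 1
  · rw [Finset.card_univ, sqrt_eq_rpow, ← rpow_neg (by positivity), ← rpow_natCast,
      ← rpow_mul (by positivity)]
    ring_nf
  · simp [← Finset.sum_div, Finset.sum_neg_distrib]

lemma integrable_sq_norm_mul_maxwellian (c : EuclideanSpace ℝ ι) {d : ℝ} (hd : 0 < d) :
    Integrable fun v ↦ ‖v‖ ^ 2 * maxwellian c d v := by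
  rw [← (PiLp.volume_preserving_toLp ι).integrable_comp_emb
    (MeasurableEquiv.toLp 2 _).measurableEmbedding]
  simp only [Function.comp_def, maxwellian_toLp_eq_prod c hd, EuclideanSpace.real_norm_sq_eq]
  exact integrable_sum_sq_mul_prod_gaussianPDFReal _ (by simpa using hd)

lemma integral_sq_norm_mul_maxwellian (c : EuclideanSpace ℝ ι) {d : ℝ} (hd : 0 < d) :
    ∫ v, ‖v‖ ^ 2 * maxwellian c d v = ‖c‖ ^ 2 + Fintype.card ι * d := by
  rw [← (PiLp.volume_preserving_toLp ι).integral_comp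
    (MeasurableEquiv.toLp 2 _).measurableEmbedding]
  simp only [maxwellian_toLp_eq_prod c hd, EuclideanSpace.real_norm_sq_eq]
  rw [integral_sum_sq_mul_prod_gaussianPDFReal _ (by simpa using hd), Real.coe_toNNReal _ hd.le]

end Maxwellian

lemma bbgsp_temperature_pos {E : Type*} [SeminormedAddCommGroup E] {KB ms mk Ts Tk a b γ Tsk : ℝ}
    {us uk : E} (hKB : 0 < KB) (hms : 0 < ms) (hmk : 0 < mk) (hTs : 0 < Ts) (hTk : 0 < Tk)
    (ha : a = mk / (ms + mk)) (hb : b = 2 * a * ms / (ms + mk))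
    (hγ : γ = ms * a / 3 * (2 * mk / (ms + mk) - a))
    (hTsk : Tsk = (1 - b) * Ts + b * Tk + γ / KB * ‖us - uk‖ ^ 2) :
    0 < Tsk := by
  have hb' : b = 2 * ms * mk / (ms + mk) ^ 2 := by rw [hb, ha]; field_simp
  have h1b : 1 - b = (ms ^ 2 + mk ^ 2) / (ms + mk) ^ 2 := by rw [hb']; field_simp; ring
  have hγ' : γ = ms * a ^ 2 / 3 := by rw [hγ, ha]; field_simp; ring
  have hbTk : 0 < b * Tk := by rw [hb']; positivity
  rw [hTsk, h1b, hγ']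
  positivity

lemma bbgsp_energy_gap {E : Type*} [NormedAddCommGroup E] [InnerProductSpace ℝ E]
    {KB ms mk Ts Tk a b γ Tsk : ℝ} {us uk usk : E} (hKB : KB ≠ 0) (hms : 0 < ms) (hmk : 0 < mk)
    (ha : a = mk / (ms + mk)) (husk : usk = (1 - a) • us + a • uk)
    (hb : b = 2 * a * ms / (ms + mk)) (hγ : γ = ms * a / 3 * (2 * mk / (ms + mk) - a))
    (hTsk : Tsk = (1 - b) * Ts + b * Tk + γ / KB * ‖us - uk‖ ^ 2) :
    ms / 2 * (‖usk‖ ^ 2 + 3 * (KB * Tsk / ms)) - ms / 2 * (‖us‖ ^ 2 + 3 * KB * Ts / ms)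
      = ms * mk / (ms + mk) ^ 2 * (⟪ms • us + mk • uk, uk - us⟫ + 3 * KB * (Tk - Ts)) := by
  subst ha husk hb hγ hTsk
  simp only [norm_add_sq_real, norm_sub_sq_real, norm_smul, inner_add_left, inner_sub_right,
    real_inner_smul_left, real_inner_smul_right, real_inner_self_eq_norm_sq,
    real_inner_comm uk us, Real.norm_eq_abs, mul_pow, sq_abs]
  field_simp
  ring

theorem bbgsp_energy_exchange_rate_general
    (KB ms mk ns nk lamsk lamks : ℝ) (hKB : 0 < KB) (hms : 0 < ms) (hmk : 0 < mk)
    (us uk : EuclideanSpace ℝ (Fin 3)) (Ts Tk : ℝ) (hTs : 0 < Ts) (hTk : 0 < Tk)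
    (fs : EuclideanSpace ℝ (Fin 3) → ℝ)
    (hfv2int : Integrable (fun v => ‖v‖ ^ 2 * fs v))
    (hf2 : ∫ v, ‖v‖ ^ 2 * fs v = ns * ‖us‖ ^ 2 + 3 * ns * KB * Ts / ms)
    (νsk : ℝ) (hνsk : νsk = lamsk * nk)
    (a : ℝ) (ha : a = mk / (ms + mk))
    (usk : EuclideanSpace ℝ (Fin 3)) (husk : usk = (1 - a) • us + a • uk)
    (b : ℝ) (hb : b = 2 * a * ms / (ms + mk))
    (γ : ℝ) (hγ : γ = ms * a / 3 * (2 * mk / (ms + mk) - a))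
    (Tsk : ℝ) (hTsk : Tsk = (1 - b) * Ts + b * Tk + γ / KB * ‖us - uk‖ ^ 2)
    (Mx : EuclideanSpace ℝ (Fin 3) → EuclideanSpace ℝ (Fin 3) → ℝ → ℝ)
    (hMx : ∀ v c d, Mx v c d = (2 * Real.pi * d) ^ (-(3 : ℝ) / 2)
      * Real.exp (-‖v - c‖ ^ 2 / (2 * d)))
    (Ssk Sks : ℝ)
    (hSsk : Ssk = lamsk * (ms * mk / (ms + mk) ^ 2) * ns * nk
      * (⟪ms • us + mk • uk, uk - us⟫ + 3 * KB * (Tk - Ts)))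
    (hSks : Sks = lamks * (mk * ms / (mk + ms) ^ 2) * nk * ns
      * (⟪mk • uk + ms • us, us - uk⟫ + 3 * KB * (Ts - Tk))) :
    (∫ v, ms * ‖v‖ ^ 2 / 2 * (νsk * (ns * Mx v usk (KB * Tsk / ms) - fs v))) = Ssk
      ∧ (lamsk = lamks → Ssk + Sks = 0) := by
  set d := KB * Tsk / ms
  have hd : 0 < d := by
    have := bbgsp_temperature_pos (us := us) (uk := uk) hKB hms hmk hTs hTk ha hb hγ hTsk
    positivity
  have hMx_eq (v) : Mx v usk d = maxwellian usk d v := by simp [hMx, maxwellian]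
  have henergy : ∫ v, ms * ‖v‖ ^ 2 / 2 * (νsk * (ns * Mx v usk d - fs v))
      = ms * νsk / 2 * (ns * (‖usk‖ ^ 2 + 3 * d) - (ns * ‖us‖ ^ 2 + 3 * ns * KB * Ts / ms)) := by
    calc ∫ v, ms * ‖v‖ ^ 2 / 2 * (νsk * (ns * Mx v usk d - fs v))
        = ∫ v, ms * νsk / 2 * (ns * (‖v‖ ^ 2 * maxwellian usk d v) - ‖v‖ ^ 2 * fs v) := by
          congr 1 with v
          rw [hMx_eq]
          ring
      _ = _ := by
          rw [integral_const_mul, integral_sub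
            ((integrable_sq_norm_mul_maxwellian usk hd).const_mul ns) hfv2int,
            integral_const_mul, integral_sq_norm_mul_maxwellian usk hd, hf2]
          norm_num
  refine ⟨?_, ?_⟩
  · rw [henergy, hSsk, hνsk]
    linear_combination (lamsk * nk * ns) * bbgsp_energy_gap hKB.ne' hms hmk ha husk hb hγ hTsk
  · rintro rfl
    rw [hSsk, hSks, add_comm (mk • uk), ← neg_sub uk us, inner_neg_right]
    ring

theorem bbgsp_energy_exchange_rate
    (KB ms mk ns nk lamsk lamks : ℝ) (hKB : 0 < KB) (hms : 0 < ms) (hmk : 0 < mk)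
    (hns : 0 < ns) (hnk : 0 < nk) (hlamsk : 0 < lamsk)
    (us uk : EuclideanSpace ℝ (Fin 3)) (Ts Tk : ℝ) (hTs : 0 < Ts) (hTk : 0 < Tk)
    (fs : EuclideanSpace ℝ (Fin 3) → ℝ)
    (hfint : Integrable fs)
    (hfvint : Integrable (fun v => fs v • v))
    (hfv2int : Integrable (fun v => ‖v‖ ^ 2 * fs v))
    (hf0 : ∫ v, fs v = ns)
    (hf1 : (∫ v, fs v • v) = ns • us)
    (hf2 : ∫ v, ‖v‖ ^ 2 * fs v = ns * ‖us‖ ^ 2 + 3 * ns * KB * Ts / ms)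
    (νsk : ℝ) (hνsk : νsk = lamsk * nk)
    (a : ℝ) (ha : a = mk / (ms + mk))
    (usk : EuclideanSpace ℝ (Fin 3)) (husk : usk = (1 - a) • us + a • uk)
    (b : ℝ) (hb : b = 2 * a * ms / (ms + mk))
    (γ : ℝ) (hγ : γ = ms * a / 3 * (2 * mk / (ms + mk) - a))
    (Tsk : ℝ) (hTsk : Tsk = (1 - b) * Ts + b * Tk + γ / KB * ‖us - uk‖ ^ 2)
    (Mx : EuclideanSpace ℝ (Fin 3) → EuclideanSpace ℝ (Fin 3) → ℝ → ℝ)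
    (hMx : ∀ v c d, Mx v c d = (2 * Real.pi * d) ^ (-(3 : ℝ) / 2)
      * Real.exp (-‖v - c‖ ^ 2 / (2 * d)))
    (Ssk Sks : ℝ)
    (hSsk : Ssk = lamsk * (ms * mk / (ms + mk) ^ 2) * ns * nk
      * (⟪ms • us + mk • uk, uk - us⟫ + 3 * KB * (Tk - Ts)))
    (hSks : Sks = lamks * (mk * ms / (mk + ms) ^ 2) * nk * ns
      * (⟪mk • uk + ms • us, us - uk⟫ + 3 * KB * (Ts - Tk))) :
    (∫ v, ms * ‖v‖ ^ 2 / 2 * (νsk * (ns * Mx v usk (KB * Tsk / ms) - fs v))) = Ssk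
      ∧ (lamsk = lamks → Ssk + Sks = 0) :=
  bbgsp_energy_exchange_rate_general KB ms mk ns nk lamsk lamks hKB hms hmk us uk Ts Tk hTs hTk fs
    hfv2int hf2 νsk hνsk a ha usk husk b hb γ hγ Tsk hTsk Mx hMx Ssk Sks hSsk hSks
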